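/- Let t be a positive integer and λ a t-core partition with V-coding v_0 > v_1 > ⋯ > v_{t-1} (the t-maximal elements of W(λ) = {λ_i - i + (t+1)/2 : i ≥ 1} sorted decreasingly). Then |λ| = (v_0² + v_1² + ⋯ + v_{t-1}²)/(2t) − (t² − 1)/24. -/

import Mathlib

/-- Hook length of the cell `c` in the Young diagram `Y`. -/
def YoungDiagram.hook (Y : YoungDiagram) (c : ℕ × ℕ) : ℕ :=
  Y.rowLen c.1 + Y.colLen c.2 - c.1 - c.2 - 1

/-- `Y` is a `t`-core: no hook length is divisible by `t`. -/
def YoungDiagram.IsCore (t : ℕ) (Y : YoungDiagram) : Prop :=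
  ∀ c ∈ Y.cells, ¬ (t ∣ Y.hook c)

/-- The set W(λ) = {λ_i - i + (t+1)/2 : i ≥ 1}, as a set of rationals. -/
def Wset (t : ℕ) (Y : YoungDiagram) : Set ℚ :=
  {x | ∃ i : ℕ, x = (Y.rowLen i : ℚ) - (i + 1) + (t + 1) / 2}

/-- The set of `t`-maximal elements of `X`: elements largest in their congruence
class modulo `t`. -/
def tMax (t : ℕ) (X : Set ℚ) : Set ℚ :=
  {x | x ∈ X ∧ ∀ y ∈ X, (∃ k : ℤ, y - x = (k : ℚ) * t) → y ≤ x}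

/-!
With the β-numbers `b_i = λ_i - i - 1` we have `W(λ) = {b_i + (t+1)/2}` and
`|λ| = Σ_{i<N} (b_i + i + 1)` for any `N` at least the number of rows. Hooks of length `t`
correspond to β-numbers `b` such that `b - t` is not one, so for a `t`-core `W(λ)` is closed
under `x ↦ x - t`: it is the union of the progressions of step `t` descending from the `v_j`.
Summing `x - t/2` over the elements of `W(λ)` above the cutoff `(t+1)/2 - N` telescopes along
these progressions to `Σ v_j²/2t`, minus the same quantity for the `t` elements just below the
cutoff; these are the same for every partition and account for `N²/2 + (t² - 1)/24`.
-/

open Finset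

namespace YoungDiagram

variable (Y : YoungDiagram)

def beta (i : ℕ) : ℤ := Y.rowLen i - i - 1

theorem beta_strictAnti : StrictAnti Y.beta :=
  strictAnti_nat_of_succ_lt fun i => by
    have := Y.rowLen_anti i (i + 1) i.le_succ
    simp only [beta]
    omega

theorem rowLen_eq_zero_iff (i : ℕ) : Y.rowLen i = 0 ↔ Y.colLen 0 ≤ i := by
  rw [← not_lt, ← mem_iff_lt_colLen, mem_iff_lt_rowLen]
  omega

theorem neg_sub_one_le_beta (i : ℕ) : -(i : ℤ) - 1 ≤ Y.beta i := by
  simp only [beta]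
  omega

theorem beta_of_colLen_le {i : ℕ} (h : Y.colLen 0 ≤ i) : Y.beta i = -i - 1 := by
  simp [beta, (Y.rowLen_eq_zero_iff i).2 h]

theorem beta_lt_neg_colLen_iff (i : ℕ) : Y.beta i < -(Y.colLen 0 : ℤ) ↔ Y.colLen 0 ≤ i := by
  constructor
  · have := Y.neg_sub_one_le_beta i
    omega
  · intro h
    rw [Y.beta_of_colLen_le h]
    omega

theorem exists_beta_eq {z : ℤ} (hz : z < -(Y.colLen 0 : ℤ)) : ∃ i, Y.beta i = z :=
  ⟨(-z - 1).toNat, by rw [Y.beta_of_colLen_le (by omega)]; omega⟩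

theorem card_eq_sum_rowLen {L : ℕ} (hL : Y.colLen 0 ≤ L) :
    Y.card = ∑ i ∈ range L, Y.rowLen i := by
  rw [YoungDiagram.card, card_eq_sum_card_fiberwise (f := Prod.fst) (t := range L)]
  · exact sum_congr rfl fun i _ => (Y.rowLen_eq_card).symm
  · intro c hc
    have : (c.1, 0) ∈ Y := Y.up_left_mem le_rfl (Nat.zero_le _) ((mem_cells c).1 hc)
    simpa using (mem_iff_lt_colLen.1 this).trans_le hL

/-- If `b - t` is not a β-number of `Y` while `b = Y.beta i` is, the cell in row `i` and
column `b - t + k`, where `Y.beta k` is the first β-number below `b - t`, has hook length `t`. -/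
theorem IsCore.exists_beta_eq_sub {t : ℕ} (hY : Y.IsCore t) (i : ℕ) :
    ∃ k, Y.beta k = Y.beta i - t := by
  by_contra! hne
  set m := Y.beta i - t
  have hex : ∃ k, Y.beta k < m := by
    obtain ⟨k, hk⟩ := Y.exists_beta_eq (z := min m 0 - Y.colLen 0 - 1) (by omega)
    exact ⟨k, by omega⟩
  classical
  set k := Nat.find hex
  have hk : Y.beta k < m := Nat.find_spec hex
  have hik : i < k := by
    by_contra! hki
    have := Y.beta_strictAnti.antitone hki
    have := hne i
    omega
  have hk1 : m < Y.beta (k - 1) :=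
    lt_of_le_of_ne (not_lt.1 (Nat.find_min hex (by omega))) (hne _).symm
  set j := (m + k).toNat
  have hj : (j : ℤ) = m + k := Int.toNat_of_nonneg (by linarith [Y.neg_sub_one_le_beta k])
  have hcol : Y.colLen j = k := by
    have h1 : k - 1 < Y.colLen j := by
      rw [← mem_iff_lt_colLen, mem_iff_lt_rowLen]
      simp only [beta] at hk1
      omega
    have h2 : ¬ k < Y.colLen j := by
      rw [← mem_iff_lt_colLen, mem_iff_lt_rowLen]
      simp only [beta] at hk
      omega
    omega
  have hmem : (i, j) ∈ Y.cells := (mem_cells _).2 (mem_iff_lt_colLen.2 (hcol ▸ hik))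
  refine hY (i, j) hmem ⟨1, ?_⟩
  have hrow : j < Y.rowLen i := mem_iff_lt_rowLen.1 ((mem_cells _).1 hmem)
  simp only [hook, hcol]
  simp only [m, beta] at hj
  omega

end YoungDiagram

section tMax

variable {X : Set ℚ} {t : ℕ}

theorem sub_nat_mul_mem (hX : ∀ x ∈ X, x - t ∈ X) {x : ℚ} (hx : x ∈ X) (n : ℕ) :
    x - n * t ∈ X := by
  induction n with
  | zero => simpa using hx
  | succ n ih => simpa [add_mul, sub_add_eq_sub_sub] using hX _ ih

theorem mem_tMax_iff (ht : 0 < t) (hX : ∀ x ∈ X, x - t ∈ X) {x : ℚ} :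
    x ∈ tMax t X ↔ x ∈ X ∧ x + t ∉ X := by
  have ht' : (0 : ℚ) < t := by exact_mod_cast ht
  constructor
  · rintro ⟨hx, hmax⟩
    refine ⟨hx, fun hxt => ?_⟩
    have := hmax _ hxt ⟨1, by ring⟩
    linarith
  · rintro ⟨hx, hxt⟩
    refine ⟨hx, fun y hy ⟨k, hk⟩ => ?_⟩
    by_contra! hxy
    have hk1 : 1 ≤ k := by
      have : (0 : ℚ) < k := pos_of_mul_pos_left (by linarith) ht'.le
      exact_mod_cast this
    refine hxt ?_
    convert sub_nat_mul_mem hX hy (k - 1).toNat using 1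
    rw [show (((k - 1).toNat : ℕ) : ℚ) = k - 1 by exact_mod_cast Int.toNat_of_nonneg (by omega)]
    linarith

/-- Summation by parts along the arithmetic progressions of step `t` in `X`: since
`x - t/2 = x²/2t - (x - t)²/2t`, the sum over `S` telescopes down each progression, leaving
its top element (in `T`) and the first element below the cutoff `a` (in `D`). -/
theorem sum_sub_half_eq_sum_sq_tMax_sub_sum_sq (ht : 0 < t) (hX : ∀ x ∈ X, x - t ∈ X)
    {a : ℚ} (hbot : ∀ x ∈ X, x + t < a → x + t ∈ X) {S D T : Finset ℚ}
    (hS : ∀ x, x ∈ S ↔ x ∈ X ∧ a ≤ x) (hD : ∀ x, x ∈ D ↔ x ∈ X ∧ a - t ≤ x ∧ x < a)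
    (hT : ∀ x, x ∈ T ↔ x ∈ tMax t X) :
    ∑ x ∈ S, (x - t / 2) = ∑ x ∈ T, x ^ 2 / (2 * t) - ∑ x ∈ D, x ^ 2 / (2 * t) := by
  have ht' : (t : ℚ) ≠ 0 := by positivity
  set G : ℚ → ℚ := fun x => x ^ 2 / (2 * t)
  have hdisjSD : Disjoint S D := by
    rw [disjoint_left]
    intro x hxS hxD
    linarith [((hS x).1 hxS).2, ((hD x).1 hxD).2.2]
  have hdisj : Disjoint (S.image (· - (t : ℚ))) T := by
    rw [disjoint_left]
    intro x hxS hxT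
    obtain ⟨y, hy, rfl⟩ := mem_image.1 hxS
    exact (((mem_tMax_iff ht hX).1 ((hT _).1 hxT)).2 (by simpa using ((hS y).1 hy).1))
  have hunion : S ∪ D = S.image (· - (t : ℚ)) ∪ T := by
    ext x
    simp only [mem_union, mem_image, hS, hD, hT, mem_tMax_iff ht hX]
    constructor
    · rintro (⟨hx, hax⟩ | ⟨hx, hax, -⟩) <;>
      · by_cases hxt : x + t ∈ X
        · exact Or.inl ⟨x + t, ⟨hxt, by linarith [hbot x hx]⟩, by ring⟩
        · exact Or.inr ⟨hx, hxt⟩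
    · rintro (⟨y, ⟨hy, hay⟩, rfl⟩ | ⟨hx, hxt⟩)
      · by_cases hya : a ≤ y - t
        · exact Or.inl ⟨hX y hy, hya⟩
        · exact Or.inr ⟨hX y hy, by linarith, by linarith⟩
      · by_cases hxa : a ≤ x
        · exact Or.inl ⟨hx, hxa⟩
        · refine Or.inr ⟨hx, ?_, by linarith⟩
          by_contra! h
          exact hxt (hbot x hx (by linarith))
  have hsum := congrArg (∑ x ∈ ·, G x) hunion
  rw [sum_union hdisjSD, sum_union hdisj,
    sum_image fun x _ y _ (h : x - (t : ℚ) = y - t) => by linarith] at hsum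
  have htelescope (x : ℚ) : x - t / 2 = G x - G (x - t) := by
    simp only [G]
    field_simp
    ring
  rw [sum_congr rfl fun x _ => htelescope x, sum_sub_distrib]
  linarith

end tMax

theorem sum_range_add_half (n : ℕ) : ∑ i ∈ range n, ((i : ℚ) + 1 / 2) = n ^ 2 / 2 := by
  induction n with
  | zero => simp
  | succ n ih => rw [sum_range_succ, ih]; push_cast; ring

theorem sum_range_sub_sq (x : ℚ) (n : ℕ) :
    ∑ k ∈ range n, (x - k) ^ 2 =
      n * x ^ 2 - n * (n - 1) * x + n * (n - 1) * (2 * n - 1) / 6 := by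
  induction n with
  | zero => simp
  | succ n ih => rw [sum_range_succ, ih]; push_cast; ring

namespace YoungDiagram

variable (Y : YoungDiagram) (t : ℕ)

def wElem (i : ℕ) : ℚ := Y.beta i + ((t : ℚ) + 1) / 2

theorem Wset_eq_range : Wset t Y = Set.range (Y.wElem t) := by
  ext x
  simp only [Wset, wElem, beta, Set.mem_ofPred_eq, Set.mem_range]
  constructor <;> rintro ⟨i, rfl⟩ <;> exact ⟨i, by push_cast; ring⟩

theorem wElem_injective : Function.Injective (Y.wElem t) := fun i j h =>
  Y.beta_strictAnti.injective (by simpa [wElem] using h)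

theorem wElem_of_colLen_le {i : ℕ} (h : Y.colLen 0 ≤ i) :
    Y.wElem t i = ((t : ℚ) + 1) / 2 - 1 - i := by
  rw [wElem, Y.beta_of_colLen_le h]
  push_cast
  ring

theorem sum_Ico_colLen_wElem_sq :
    ∑ i ∈ Ico (Y.colLen 0) (Y.colLen 0 + t), Y.wElem t i ^ 2 =
      t * (Y.colLen 0 : ℚ) ^ 2 + t * ((t : ℚ) ^ 2 - 1) / 12 := by
  have h (k : ℕ) : Y.wElem t (Y.colLen 0 + k) = ((t : ℚ) + 1) / 2 - 1 - Y.colLen 0 - k := by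
    rw [Y.wElem_of_colLen_le t (Nat.le_add_right _ k)]
    push_cast
    ring
  simp only [sum_Ico_eq_sum_range, add_tsub_cancel_left, h, sum_range_sub_sq]
  ring

theorem card_eq_sum_wElem :
    (Y.card : ℚ) =
      ∑ i ∈ range (Y.colLen 0), (Y.wElem t i - t / 2) + (Y.colLen 0 : ℚ) ^ 2 / 2 := by
  rw [Y.card_eq_sum_rowLen le_rfl, ← sum_range_add_half, ← sum_add_distrib]
  push_cast
  refine sum_congr rfl fun i _ => ?_
  simp only [wElem, beta]
  push_cast
  ring

variable {Y t}

theorem IsCore.sub_mem_Wset (hY : Y.IsCore t) {x : ℚ} (hx : x ∈ Wset t Y) :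
    x - t ∈ Wset t Y := by
  rw [Wset_eq_range] at hx ⊢
  obtain ⟨i, rfl⟩ := hx
  obtain ⟨k, hk⟩ := hY.exists_beta_eq_sub Y i
  exact ⟨k, by simp only [wElem, hk]; push_cast; ring⟩

theorem add_mem_Wset_of_lt {x : ℚ} (hx : x ∈ Wset t Y)
    (hlt : x + t < ((t : ℚ) + 1) / 2 - Y.colLen 0) : x + t ∈ Wset t Y := by
  rw [Wset_eq_range] at hx ⊢
  obtain ⟨i, rfl⟩ := hx
  simp only [wElem] at hlt
  obtain ⟨k, hk⟩ := Y.exists_beta_eq (z := Y.beta i + t)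
    (by exact_mod_cast (by linarith : (Y.beta i : ℚ) + t < -(Y.colLen 0 : ℚ)))
  exact ⟨k, by simp only [wElem, hk]; push_cast; ring⟩

theorem mem_image_range_colLen_iff (x : ℚ) :
    x ∈ (range (Y.colLen 0)).image (Y.wElem t) ↔
      x ∈ Wset t Y ∧ ((t : ℚ) + 1) / 2 - Y.colLen 0 ≤ x := by
  simp only [mem_image, mem_range, Wset_eq_range, Set.mem_range]
  constructor
  · rintro ⟨i, hi, rfl⟩
    refine ⟨⟨i, rfl⟩, ?_⟩
    have := (Y.beta_lt_neg_colLen_iff i).not.2 (by omega)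
    simp only [wElem]
    have : -(Y.colLen 0 : ℚ) ≤ Y.beta i := by exact_mod_cast not_lt.1 this
    linarith
  · rintro ⟨⟨i, rfl⟩, hi⟩
    refine ⟨i, not_le.1 fun h => ?_, rfl⟩
    have := (Y.beta_lt_neg_colLen_iff i).2 h
    simp only [wElem] at hi
    have : (Y.beta i : ℚ) < -(Y.colLen 0 : ℚ) := by exact_mod_cast this
    linarith

theorem mem_image_Ico_colLen_iff (x : ℚ) :
    x ∈ (Ico (Y.colLen 0) (Y.colLen 0 + t)).image (Y.wElem t) ↔
      x ∈ Wset t Y ∧ ((t : ℚ) + 1) / 2 - Y.colLen 0 - t ≤ x ∧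
        x < ((t : ℚ) + 1) / 2 - Y.colLen 0 := by
  simp only [mem_image, mem_Ico, Wset_eq_range, Set.mem_range]
  constructor
  · rintro ⟨i, ⟨hNi, hit⟩, rfl⟩
    refine ⟨⟨i, rfl⟩, ?_⟩
    rw [Y.wElem_of_colLen_le t hNi]
    have : (i : ℚ) + 1 ≤ Y.colLen 0 + t := by exact_mod_cast hit
    have : (Y.colLen 0 : ℚ) ≤ i := by exact_mod_cast hNi
    constructor <;> linarith
  · rintro ⟨⟨i, rfl⟩, hlo, hhi⟩
    have hNi : Y.colLen 0 ≤ i := by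
      refine (Y.beta_lt_neg_colLen_iff i).1 ?_
      simp only [wElem] at hhi
      exact_mod_cast (by linarith : (Y.beta i : ℚ) < -(Y.colLen 0 : ℚ))
    refine ⟨i, ⟨hNi, ?_⟩, rfl⟩
    rw [Y.wElem_of_colLen_le t hNi] at hlo
    have : (i : ℚ) < Y.colLen 0 + t := by linarith
    exact_mod_cast this

end YoungDiagram

/-- size of a t-core in terms of its V-coding. -/
theorem stmt_3 (t : ℕ) (ht : 0 < t) (Y : YoungDiagram) (hY : Y.IsCore t)
    (v : Fin t → ℚ) (hv : StrictAnti v) (hrange : Set.range v = tMax t (Wset t Y)) :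
    (Y.card : ℚ) = (∑ i, v i ^ 2) / (2 * t) - ((t : ℚ) ^ 2 - 1) / 24 := by
  have hsum := sum_sub_half_eq_sum_sq_tMax_sub_sum_sq ht (fun _ => hY.sub_mem_Wset)
    (fun _ => YoungDiagram.add_mem_Wset_of_lt) YoungDiagram.mem_image_range_colLen_iff
    YoungDiagram.mem_image_Ico_colLen_iff
    (T := univ.image v) (fun x => by simp [← hrange])
  rw [sum_image fun i _ j _ h => Y.wElem_injective t h,
    sum_image fun i _ j _ h => Y.wElem_injective t h, sum_image fun i _ j _ h => hv.injective h,
    ← sum_div, ← sum_div, Y.sum_Ico_colLen_wElem_sq t] at hsum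
  rw [Y.card_eq_sum_wElem t, hsum]
  field_simp
  ring
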